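/- arXiv:2109.09002 — 4 statements merged into one kernel-verified Lean document; each statement's English description precedes it below -/
import Mathlib

section
/- Let M be the (ℓ+1)×ℓ matrix over the polynomial ring k[y, a₁, …, a_ℓ] with y in the main diagonal positions (i,i) for i = 1,…,ℓ, entries 1 in positions (i,i+1) for i = 1,…,ℓ-1, bottom row (row ℓ+1) equal to (a₁, a₂, …, a_ℓ), and zeros elsewhere. For each i = 1,…,ℓ, the ℓ×ℓ minor δᵢ of M obtained by deleting row i equals (-y)^{ℓ-i} · (aᵢ y^{i-1} - a_{i-1} y^{i-2} + ⋯ + (-1)^{i+1} a₁). -/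
open MvPolynomial Matrix

section Aux

variable {R : Type*} [CommRing R]

/-- Auxiliary matrix: rows `p < i` have `1` at `q = p` and `y` at `q = p-1`;
rows `p ≥ i` have `y` at `q = p` and `1` at `q = p+1`. -/
def detAuxE (y : R) (m i : ℕ) : Matrix (Fin m) (Fin m) R :=
  Matrix.of fun p q =>
    if (p : ℕ) < i then (if (q : ℕ) = p then 1 else if (q : ℕ) + 1 = p then y else 0)
    else (if (q : ℕ) = p then y else if (q : ℕ) = (p : ℕ) + 1 then 1 else 0)

lemma det_detAuxE (y : R) : ∀ m i, (detAuxE y m i).det = y ^ (m - i) := by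
  intro m
  induction m with
  | zero =>
    intro i
    simp [Matrix.det_fin_zero, Nat.zero_sub]
  | succ m ih =>
    intro i
    cases i with
    | zero =>
      rw [Matrix.det_of_upperTriangular]
      · simp [detAuxE, Finset.prod_const, Nat.sub_zero, Finset.card_univ]
      · intro a b hb
        simp only [id_eq] at hb
        have hba : (b : ℕ) < (a : ℕ) := hb
        simp only [detAuxE, Matrix.of_apply]
        split_ifs <;> first | rfl | omega
    | succ s =>
      rw [Matrix.det_succ_row_zero]
      rw [Finset.sum_eq_single_of_mem (0 : Fin (m + 1)) (Finset.mem_univ _)]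
      · have h0 : detAuxE y (m + 1) (s + 1) 0 0 = 1 := by
          simp [detAuxE]
        rw [h0]
        have hsub : (detAuxE y (m + 1) (s + 1)).submatrix Fin.succ
            (Fin.succAbove 0) = detAuxE y m s := by
          ext p q
          simp only [Matrix.submatrix_apply, detAuxE, Matrix.of_apply, Fin.succAbove_zero,
            Fin.val_succ]
          split_ifs <;> first | rfl | omega
        rw [hsub, ih s]
        simp [Nat.succ_sub_succ]
      · intro b _ hb
        have hb0 : detAuxE y (m + 1) (s + 1) 0 b = 0 := by
          have hbv : (b : ℕ) ≠ 0 := fun h => hb (Fin.ext (by simpa using h))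
          have hz : ((0 : Fin (m + 1)) : ℕ) = 0 := rfl
          simp only [detAuxE, Matrix.of_apply]
          split_ifs <;> first | rfl | omega
        rw [hb0]; ring

/-- Auxiliary matrix: the nilpotent block matrix with row `i` deleted and bottom row last,
over an arbitrary commutative ring. -/
def detAuxD (y : R) (v : ℕ → R) (ℓ i : ℕ) : Matrix (Fin ℓ) (Fin ℓ) R :=
  Matrix.of fun p q =>
    if (p : ℕ) + 1 = ℓ then v q
    else if (p : ℕ) < i then
      (if (q : ℕ) = p then y else if (q : ℕ) = (p : ℕ) + 1 then 1 else 0)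
    else (if (q : ℕ) = (p : ℕ) + 1 then y else if (q : ℕ) = (p : ℕ) + 2 then 1 else 0)

lemma det_detAuxD (y : R) : ∀ ℓ (v : ℕ → R) i, i < ℓ →
    (detAuxD y v ℓ i).det =
      (-y) ^ (ℓ - 1 - i) * ∑ j ∈ Finset.range (i + 1), (-1 : R) ^ (i - j) * v j * y ^ j := by
  intro ℓ
  induction ℓ with
  | zero => intro v i hi; omega
  | succ m ih =>
    intro v i hi
    rw [Matrix.det_succ_column_zero]
    cases i with
    | zero =>
      rw [Finset.sum_eq_single_of_mem (Fin.last m) (Finset.mem_univ _)]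
      · have h0 : detAuxD y v (m + 1) 0 (Fin.last m) 0 = v 0 := by
          simp [detAuxD]
        rw [h0]
        have hsub : (detAuxD y v (m + 1) 0).submatrix (Fin.succAbove (Fin.last m))
            Fin.succ = detAuxE y m 0 := by
          ext p q
          simp only [Matrix.submatrix_apply, detAuxD, detAuxE, Matrix.of_apply,
            Fin.succAbove_last, Fin.val_succ, Fin.coe_castSucc]
          split_ifs <;> first | rfl | omega
        rw [hsub, det_detAuxE]
        simp only [Fin.val_last, Nat.sub_zero, Nat.add_sub_cancel, zero_add,
          Finset.sum_range_one, pow_zero, one_mul, mul_one, Nat.sub_self]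
        rw [neg_pow]
        ring
      · intro b _ hb
        have hb0 : detAuxD y v (m + 1) 0 b 0 = 0 := by
          have h2 : (b : ℕ) ≠ m := fun h => hb (Fin.ext (by simp [h]))
          have hbm : (b : ℕ) < m + 1 := b.isLt
          have hz : ((0 : Fin (m + 1)) : ℕ) = 0 := rfl
          have hlz : ((Fin.last m : Fin (m + 1)) : ℕ) = m := rfl
          simp only [detAuxD, Matrix.of_apply]
          split_ifs <;> first | rfl | omega
        rw [hb0]; ring
    | succ s =>
      have hsm : s < m := by omega
      have key : ∀ b : Fin (m + 1), b ≠ 0 → b ≠ Fin.last m →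
          detAuxD y v (m + 1) (s + 1) b 0 = 0 := by
        intro b hb0 hbl
        have h1 : (b : ℕ) ≠ 0 := fun h => hb0 (Fin.ext (by simpa using h))
        have h2 : (b : ℕ) ≠ m := fun h => hbl (Fin.ext (by simp [h]))
        have hbm : (b : ℕ) < m + 1 := b.isLt
        have hz : ((0 : Fin (m + 1)) : ℕ) = 0 := rfl
        have hlz : ((Fin.last m : Fin (m + 1)) : ℕ) = m := rfl
        simp only [detAuxD, Matrix.of_apply]
        split_ifs <;> first | rfl | omega
      have hsplit : ∑ p : Fin (m + 1), (-1 : R) ^ (p : ℕ) * detAuxD y v (m + 1) (s + 1) p 0 *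
            Matrix.det ((detAuxD y v (m + 1) (s + 1)).submatrix p.succAbove Fin.succ)
          = (-1 : R) ^ ((0 : Fin (m + 1)) : ℕ) * detAuxD y v (m + 1) (s + 1) 0 0 *
              Matrix.det ((detAuxD y v (m + 1) (s + 1)).submatrix (Fin.succAbove 0) Fin.succ)
            + (-1 : R) ^ ((Fin.last m : Fin (m + 1)) : ℕ) *
                detAuxD y v (m + 1) (s + 1) (Fin.last m) 0 *
              Matrix.det ((detAuxD y v (m + 1) (s + 1)).submatrix
                (Fin.succAbove (Fin.last m)) Fin.succ) := by
        rw [← Finset.sum_subset (Finset.subset_univ {(0 : Fin (m + 1)), Fin.last m})]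
        · rw [Finset.sum_pair (by
            intro h
            have := congrArg Fin.val h
            simp at this
            omega : (0 : Fin (m + 1)) ≠ Fin.last m)]
        · intro b _ hb
          simp only [Finset.mem_insert, Finset.mem_singleton] at hb
          push_neg at hb
          rw [key b hb.1 hb.2]; ring
      rw [hsplit]
      have h00 : detAuxD y v (m + 1) (s + 1) 0 0 = y := by
        have hz : ((0 : Fin (m + 1)) : ℕ) = 0 := rfl
        simp only [detAuxD, Matrix.of_apply, hz]
        rw [if_neg (by omega : ¬ (0 : ℕ) + 1 = m + 1),
          if_pos (by omega : (0 : ℕ) < s + 1)]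
        simp
      have hl0 : detAuxD y v (m + 1) (s + 1) (Fin.last m) 0 = v 0 := by
        have hz : ((0 : Fin (m + 1)) : ℕ) = 0 := rfl
        have hlz : ((Fin.last m : Fin (m + 1)) : ℕ) = m := rfl
        simp only [detAuxD, Matrix.of_apply, hz, hlz]
        simp
      have hsub0 : (detAuxD y v (m + 1) (s + 1)).submatrix (Fin.succAbove 0) Fin.succ
          = detAuxD y (fun j => v (j + 1)) m s := by
        ext p q
        simp only [Matrix.submatrix_apply, detAuxD, Matrix.of_apply, Fin.succAbove_zero,
          Fin.val_succ]
        split_ifs <;> first | rfl | omega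
      have hsubl : (detAuxD y v (m + 1) (s + 1)).submatrix (Fin.succAbove (Fin.last m))
          Fin.succ = detAuxE y m (s + 1) := by
        ext p q
        have hpm : (p : ℕ) < m := p.isLt
        simp only [Matrix.submatrix_apply, detAuxD, detAuxE, Matrix.of_apply,
          Fin.succAbove_last, Fin.val_succ, Fin.coe_castSucc]
        split_ifs <;> first | rfl | omega
      rw [h00, hl0, hsub0, hsubl, det_detAuxE, ih (fun j => v (j + 1)) s hsm]
      simp only [Fin.val_last, Fin.val_zero, pow_zero, one_mul]
      rw [Finset.sum_range_succ' _ (s + 1)]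
      have e1 : m + 1 - 1 - (s + 1) = m - 1 - s := by omega
      have e2 : m - (s + 1) = m - 1 - s := by omega
      rw [e1, e2]
      have e3 : ∀ j : ℕ, s + 1 - (j + 1) = s - j := fun j => by omega
      have hrw : ∑ j ∈ Finset.range (s + 1),
            (-1 : R) ^ (s + 1 - (j + 1)) * v (j + 1) * y ^ (j + 1)
          = y * ∑ j ∈ Finset.range (s + 1), (-1 : R) ^ (s - j) * v (j + 1) * y ^ j := by
        rw [Finset.mul_sum]
        refine Finset.sum_congr rfl fun j _ => ?_
        rw [e3 j]; ring
      rw [hrw, mul_add]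
      congr 1
      · ring
      · have hpow : (-1 : R) ^ (m : ℕ) = (-1 : R) ^ (m - 1 - s) * (-1 : R) ^ (s + 1 - 0) := by
          rw [← pow_add]
          congr 1
          omega
        rw [neg_pow y (m - 1 - s), hpow]
        ring

end Aux

/-- The `(ℓ+1) × ℓ` matrix with `y` on the main diagonal, `1` on the superdiagonal, bottom
row `(a₁, …, a_ℓ)`, and zeros elsewhere.  Here the polynomial ring is `k[y, a₁, …, a_ℓ]`,
realized as `MvPolynomial (Fin (ℓ+1)) k` with `y = X 0` and `aᵢ = X i` for `1 ≤ i ≤ ℓ`. -/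
noncomputable def nilpotentBlockMatrix (k : Type*) [CommRing k] (ℓ : ℕ) :
    Matrix (Fin (ℓ + 1)) (Fin ℓ) (MvPolynomial (Fin (ℓ + 1)) k) :=
  Matrix.of fun i j =>
    if (i : ℕ) = ℓ then X (Fin.succ j)                 -- bottom row: a_{j+1}
    else if (i : ℕ) = (j : ℕ) then X 0                 -- diagonal: y
    else if (i : ℕ) + 1 = (j : ℕ) then 1               -- superdiagonal: 1
    else 0

/-- Lemma 6.2 of "Rational singularities of nested Hilbert schemes": for `1 ≤ i ≤ ℓ`, the
`ℓ × ℓ` minor `δᵢ` of `M` obtained by deleting row `i` equals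
`(-y)^{ℓ-i} (aᵢ y^{i-1} - a_{i-1} y^{i-2} + ⋯ + (-1)^{i+1} a₁)`.
Below `i : Fin ℓ` represents the `1`-indexed row `i+1`, so the formula reads
`δᵢ = (-y)^{ℓ-1-i} · Σ_{j=0}^{i} (-1)^{i-j} a_{j+1} y^{j}` in `0`-indexed form. -/
theorem det_deleteRow_nilpotentBlockMatrix (k : Type*) [CommRing k] (ℓ : ℕ) (hℓ : 1 ≤ ℓ)
    (i : Fin ℓ) :
    Matrix.det
        ((nilpotentBlockMatrix k ℓ).submatrix (Fin.succAbove (Fin.castSucc i)) id)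
      = (-(X 0 : MvPolynomial (Fin (ℓ + 1)) k)) ^ (ℓ - 1 - (i : ℕ)) *
          ∑ j : Fin ((i : ℕ) + 1),
            (-1 : MvPolynomial (Fin (ℓ + 1)) k) ^ ((i : ℕ) - (j : ℕ)) *
              X (⟨(j : ℕ) + 1, by omega⟩ : Fin (ℓ + 1)) * (X 0) ^ (j : ℕ) := by
  set v : ℕ → MvPolynomial (Fin (ℓ + 1)) k :=
    fun j => if h : j + 1 < ℓ + 1 then X (⟨j + 1, h⟩ : Fin (ℓ + 1)) else 0 with hv
  have hM : (nilpotentBlockMatrix k ℓ).submatrix (Fin.succAbove (Fin.castSucc i)) id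
      = detAuxD (X 0) v ℓ (i : ℕ) := by
    refine Matrix.ext fun p q => ?_
    have hq : (q : ℕ) < ℓ := q.isLt
    have hp : (p : ℕ) < ℓ := p.isLt
    have hil : (i : ℕ) < ℓ := i.isLt
    have hr : (((Fin.castSucc i).succAbove p : Fin (ℓ + 1)) : ℕ)
        = if (p : ℕ) < (i : ℕ) then (p : ℕ) else (p : ℕ) + 1 := by
      rcases Nat.lt_or_ge (p : ℕ) (i : ℕ) with h | h
      · rw [Fin.succAbove_of_castSucc_lt _ _ (Fin.castSucc_lt_castSucc_iff.mpr
          (Fin.lt_def.mpr h)), if_pos h, Fin.coe_castSucc]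
      · rw [Fin.succAbove_of_le_castSucc _ _ (Fin.castSucc_le_castSucc_iff.mpr
          (Fin.le_def.mpr h)), if_neg (Nat.not_lt.mpr h), Fin.val_succ]
    simp only [Matrix.submatrix_apply, id_eq, nilpotentBlockMatrix, detAuxD,
      Matrix.of_apply, hr]
    by_cases hpi : (p : ℕ) < (i : ℕ)
    · rw [if_pos hpi, if_neg (by omega : ¬ (p : ℕ) = ℓ),
        if_neg (by omega : ¬ (p : ℕ) + 1 = ℓ), if_pos hpi]
      split_ifs <;> first | rfl | omega
    · rw [if_neg hpi]
      by_cases hlast : (p : ℕ) + 1 = ℓ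
      · rw [if_pos hlast, if_pos hlast, hv]
        show X (Fin.succ q) = dite ((q : ℕ) + 1 < ℓ + 1)
          (fun h => X (⟨(q : ℕ) + 1, h⟩ : Fin (ℓ + 1))) (fun _ => 0)
        rw [dif_pos (by omega : (q : ℕ) + 1 < ℓ + 1)]
        exact congrArg X (Fin.ext rfl)
      · rw [if_neg hlast, if_neg hlast, if_neg hpi]
        split_ifs <;> first | rfl | omega
  rw [hM, det_detAuxD (X 0) ℓ v (i : ℕ) i.isLt]
  congr 1
  rw [← Fin.sum_univ_eq_sum_range
    (fun j => (-1 : MvPolynomial (Fin (ℓ + 1)) k) ^ ((i : ℕ) - j) * v j * (X 0) ^ j)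
    ((i : ℕ) + 1)]
  refine Finset.sum_congr rfl fun j _ => ?_
  have hj : (j : ℕ) < (i : ℕ) + 1 := j.isLt
  have hil : (i : ℕ) < ℓ := i.isLt
  show (-1 : MvPolynomial (Fin (ℓ + 1)) k) ^ ((i : ℕ) - (j : ℕ)) *
      (dite ((j : ℕ) + 1 < ℓ + 1) (fun h => X (⟨(j : ℕ) + 1, h⟩ : Fin (ℓ + 1))) (fun _ => 0)) *
      (X 0) ^ (j : ℕ) = _
  rw [dif_pos (by omega : (j : ℕ) + 1 < ℓ + 1)]
end

section
/- Let E = k^n be a finite-dimensional vector space over a field k, let A : E → E be a linear map and a : E → k a linear functional. Then the following are equivalent: (i) dim(ker A ∩ ker a) ≥ 1 and dim(ker A² ∩ ker (a∘A) ∩ ker a) ≥ 2; (ii) there exists a flag of subspaces W₁ ⊆ W₂ ⊆ E with dim W₁ = 1, dim W₂ = 2, such that A(W₂) ⊆ W₁, A(W₁) = 0, and a(W₂) = 0. -/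
open Module LinearMap

lemma finrank_span_pair_aux {k E : Type*} [Field k] [AddCommGroup E] [Module k E]
    {x y : E} (h : LinearIndependent k ![x, y]) :
    Module.finrank k ↥(Submodule.span k {x, y}) = 2 := by
  have h2 := finrank_span_eq_card h
  have hr : Set.range ![x, y] = {x, y} := by
    ext z
    simp [Fin.exists_fin_two, or_comm]
  rwa [hr] at h2

/-- Lemma 6.1 of "Rational singularities of nested Hilbert schemes": for a linear endomorphism
`A` of a finite-dimensional vector space `E` and a linear functional `a` on `E`, one has
`dim(ker A ∩ ker a) ≥ 1` and `dim(ker A² ∩ ker(a∘A) ∩ ker a) ≥ 2` if and only if there is a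
flag `W₁ ⊆ W₂ ⊆ E` with `dim W₁ = 1`, `dim W₂ = 2`, `A(W₂) ⊆ W₁`, `A(W₁) = 0`, `a(W₂) = 0`. -/
theorem kernel_dims_iff_flag {k E : Type*} [Field k] [AddCommGroup E] [Module k E]
    [FiniteDimensional k E] (A : E →ₗ[k] E) (a : E →ₗ[k] k) :
    (1 ≤ Module.finrank k ↥(LinearMap.ker A ⊓ LinearMap.ker a) ∧
      2 ≤ Module.finrank k
        ↥(LinearMap.ker (A ∘ₗ A) ⊓ LinearMap.ker (a ∘ₗ A) ⊓ LinearMap.ker a))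
    ↔ ∃ W₁ W₂ : Submodule k E, W₁ ≤ W₂ ∧
        Module.finrank k ↥W₁ = 1 ∧ Module.finrank k ↥W₂ = 2 ∧
        Submodule.map A W₂ ≤ W₁ ∧ W₁ ≤ LinearMap.ker A ∧ W₂ ≤ LinearMap.ker a := by
  set V : Submodule k E := LinearMap.ker (A ∘ₗ A) ⊓ LinearMap.ker (a ∘ₗ A) ⊓ LinearMap.ker a
    with hV
  constructor
  · rintro ⟨h1, h2⟩
    by_cases hcase : ∃ v ∈ V, A v ≠ 0
    · obtain ⟨v, hv, hAv⟩ := hcase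
      obtain ⟨⟨hv1, hv2⟩, hv3⟩ : (A (A v) = 0 ∧ a (A v) = 0) ∧ a v = 0 := by
        simpa [hV, Submodule.mem_inf] using hv
      refine ⟨Submodule.span k {A v}, Submodule.span k {A v, v}, ?_, ?_, ?_, ?_, ?_, ?_⟩
      · exact Submodule.span_mono (by simp)
      · exact finrank_span_singleton hAv
      · refine finrank_span_pair_aux ?_
        rw [linearIndependent_fin2]
        constructor
        · show v ≠ 0
          rintro rfl
          exact hAv (by simp)
        · intro c hc
          apply hAv
          have hc' : c • v = A v := by simpa using hc
          have h3 : c • A v = A (A v) := by rw [← map_smul, hc']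
          rw [hv1] at h3
          rcases smul_eq_zero.mp h3 with rfl | h
          · simpa using hc'.symm
          · exact h
      · rw [Submodule.map_span, Submodule.span_le]
        rintro x ⟨y, hy, rfl⟩
        rcases hy with rfl | rfl
        · simp [hv1]
        · exact Submodule.subset_span rfl
      · rw [Submodule.span_le]; rintro x rfl; simpa using hv1
      · rw [Submodule.span_le]; rintro x (rfl | rfl) <;> simpa
    · push_neg at hcase
      have hVA : V ≤ LinearMap.ker A := fun v hv => hcase v hv
      have hVa : V ≤ LinearMap.ker a := inf_le_right
      let B := finBasis k V
      have hn : 2 ≤ finrank k V := h2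
      have li : LinearIndependent k fun i : Fin 2 =>
          ((B (Fin.castLE hn i) : V) : E) := by
        have := (B.linearIndependent.map' V.subtype V.ker_subtype).comp
          (Fin.castLE hn) (Fin.castLE_injective hn)
        exact this
      set x : E := (B (Fin.castLE hn 0) : E) with hx
      set y : E := (B (Fin.castLE hn 1) : E) with hy
      have hxV : x ∈ V := (B (Fin.castLE hn 0)).2
      have hyV : y ∈ V := (B (Fin.castLE hn 1)).2
      have li2 : LinearIndependent k ![x, y] := by
        convert li using 1
        ext i
        fin_cases i <;> rfl
      have hxne : x ≠ 0 := by
        have := li2.ne_zero 0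
        simpa using this
      refine ⟨Submodule.span k {x}, Submodule.span k {x, y}, ?_, ?_, ?_, ?_, ?_, ?_⟩
      · exact Submodule.span_mono (by simp)
      · exact finrank_span_singleton hxne
      · exact finrank_span_pair_aux li2
      · rw [Submodule.map_span, Submodule.span_le]
        rintro z ⟨w, hw, rfl⟩
        rcases hw with rfl | rfl
        · rw [show A x = 0 from hVA hxV]
          exact Submodule.zero_mem _
        · rw [show A y = 0 from hVA hyV]
          exact Submodule.zero_mem _
      · rw [Submodule.span_le]; rintro z rfl; exact hVA hxV
      · rw [Submodule.span_le]; rintro z (rfl | rfl)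
        · exact hVa hxV
        · exact hVa hyV
  · rintro ⟨W₁, W₂, h12, hd1, hd2, hmap, hker, ha⟩
    constructor
    · have : W₁ ≤ LinearMap.ker A ⊓ LinearMap.ker a :=
        le_inf hker (le_trans h12 ha)
      calc 1 = finrank k W₁ := hd1.symm
        _ ≤ _ := Submodule.finrank_mono this
    · have hW2V : W₂ ≤ V := by
        rw [hV]
        refine le_inf (le_inf ?_ ?_) ha
        · intro x hx
          have : A x ∈ W₁ := hmap ⟨x, hx, rfl⟩
          simpa [LinearMap.mem_ker] using hker this
        · intro x hx
          have : A x ∈ W₁ := hmap ⟨x, hx, rfl⟩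
          have := (le_trans h12 ha) this
          simpa [LinearMap.mem_ker] using this
      calc 2 = finrank k W₂ := hd2.symm
        _ ≤ _ := Submodule.finrank_mono hW2V
end

section
/- Let R = k[x,y] with maximal ideal 𝔪 = (x,y), let I ⊆ R be an 𝔪-primary ideal, f ∈ I with ord(f) = ord(I), and ℓ a linear form such that the initial forms f*, ℓ* form a regular sequence in the associated graded ring gr_𝔪(R). Then for every t ≠ 0 in k, (f) + (ℓ - t)(I : ℓ) = (f, ℓ - t) ∩ (I : ℓ). -/
/-! Write `g = a f + (ℓ - t) b` with `g ∈ (I : ℓ)`. Then `(ℓ - t) · ℓ b = ℓ g - a ℓ f ∈ I`, and since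
`ℓ - t` has nonzero constant term it lies outside `𝔪 = √I`; as `I` is primary this forces `ℓ b ∈ I`,
i.e. `b ∈ (I : ℓ)`. In other words `ℓ - t` is a nonzerodivisor modulo `I : ℓ`. -/

open MvPolynomial

namespace NestedHilbertStmt6

variable (k : Type*) [Field k] [IsAlgClosed k]

/-- `R = k[x,y]` with `x = X 0`, `y = X 1`. -/
abbrev R := MvPolynomial (Fin 2) k

/-- The maximal ideal `𝔪 = (x, y)` of `k[x,y]`. -/
noncomputable def 𝔪 : Ideal (R k) := Ideal.span {X 0, X 1}

theorem span_sup_span_mul_eq_span_pair_inf {A : Type*} [CommRing A] {J : Ideal A} {f u : A}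
    (hf : f ∈ J) (hu : ∀ b, u * b ∈ J → b ∈ J) :
    Ideal.span {f} ⊔ Ideal.span {u} * J = Ideal.span {f, u} ⊓ J := by
  apply le_antisymm
  · refine sup_le ?_ (le_inf ?_ Ideal.mul_le_right)
    · rw [Ideal.span_singleton_le_iff_mem]
      exact ⟨Ideal.subset_span (by simp), hf⟩
    · exact Ideal.mul_le_left.trans (Ideal.span_mono (by simp))
  · rintro g ⟨hg, hgJ⟩
    obtain ⟨a, b, rfl⟩ := Ideal.mem_span_pair.mp hg
    have hbJ : b ∈ J := hu b <| by
      simpa [mul_comm u] using J.sub_mem hgJ (J.mul_mem_left a hf)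
    exact Submodule.add_mem_sup (Ideal.mul_mem_left _ a (Ideal.mem_span_singleton_self f))
      (mul_comm u b ▸ Ideal.mul_mem_mul (Ideal.mem_span_singleton_self u) hbJ)

theorem mem_colon_of_mul_mem_colon {A : Type*} [CommRing A] {I : Ideal A} (hI : I.IsPrimary)
    {u ℓ b : A} (hu : u ∉ I.radical) (hub : u * b ∈ I.colon (Ideal.span {ℓ})) :
    b ∈ I.colon (Ideal.span {ℓ}) := by
  rw [Ideal.mem_colon_span_singleton] at hub ⊢
  have hbℓu : b * ℓ * u ∈ I := by simpa only [mul_comm, mul_left_comm] using hub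
  exact ((Ideal.isPrimary_iff.mp hI).2 hbℓu).resolve_right hu

theorem 𝔪_le_ker_constantCoeff {K : Type*} [Field K] :
    𝔪 K ≤ RingHom.ker (constantCoeff : R K →+* K) := by
  rw [𝔪, Ideal.span_le]
  rintro p (rfl | rfl) <;> simp

theorem sub_C_notMem_𝔪 {K : Type*} [Field K] {ℓ : R K} (hℓ : ℓ.IsHomogeneous 1) {t : K}
    (ht : t ≠ 0) : ℓ - C t ∉ 𝔪 K := by
  intro hmem
  have hℓ₀ : constantCoeff ℓ = 0 := by
    simpa [constantCoeff_eq] using hℓ.coeff_eq_zero (d := 0) (by simp)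
  have hconst := 𝔪_le_ker_constantCoeff hmem
  rw [RingHom.mem_ker, map_sub, hℓ₀, constantCoeff_C, zero_sub, neg_eq_zero] at hconst
  exact ht hconst

theorem hartshorne_cleaving
    (I : Ideal (R k)) (hprim : I.IsPrimary) (hrad : I.radical = 𝔪 k)
    (f : R k) (hfI : f ∈ I)
    (ℓ : R k) (hℓ : ℓ.IsHomogeneous 1)
    (t : k) (ht : t ≠ 0) :
    Ideal.span {f} ⊔ Ideal.span {ℓ - C t} * Submodule.colon I (Ideal.span {ℓ})
      = (Ideal.span {f, ℓ - C t}) ⊓ Submodule.colon I (Ideal.span {ℓ}) := by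
  have hfJ : f ∈ I.colon (Ideal.span {ℓ}) :=
    Ideal.mem_colon_span_singleton.mpr (I.mul_mem_right ℓ hfI)
  have hℓt : ℓ - C t ∉ I.radical := hrad ▸ sub_C_notMem_𝔪 hℓ ht
  exact span_sup_span_mul_eq_span_pair_inf hfJ fun _ hb => mem_colon_of_mul_mem_colon hprim hℓt hb

end NestedHilbertStmt6
end

section
/- For n ≥ 2 and each h with 2 ≤ h ≤ n+1, the leading monomial of F_h = det W^h (the n×n minor of the generic (n+1)×n matrix W deleting row h), with respect to the graded reverse lexicographic order on the ordering w_{1,1} < w_{1,2} < ⋯ < w_{n+1,n}, is y_h := Π_{i=1}^{h-1} w_{i,n+1-i} · Π_{i=h+1}^{n+1} w_{i,n+2-i}. -/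
/-!
Expanding the determinant, a permutation `σ` contributes `± ∏_j w_{g(σ j), j}` with
`g = h.succAbove`; as `g` is injective, distinct permutations give distinct monomials, so the
support of `F_h` consists exactly of these monomials, all of degree `n`. The anti-diagonal
permutation `j ↦ n-1-j` gives the grevlex-largest one: if `σ` differs from it, let `i₀` be the first
row where they differ. In both, the rows before `i₀` use exactly the columns after `n-1-i₀`, so
`σ` puts the entry of row `i₀` in a column `j₀ < n-1-i₀`, and `w_{g i₀, j₀}` is the smallest
variable at which the two exponents differ, with exponent `1` for `σ` and `0` for the
anti-diagonal.
-/

open MvPolynomial Matrix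

namespace NestedHilbertStmt13

variable {n : ℕ}

/-- The ordering of the variables `w_{1,1} < w_{1,2} < ⋯ < w_{n+1,n}` of `A = k[w_{i,j}]`:
lexicographic on the index pairs `(i,j)`. -/
def varLT (x y : Fin (n + 1) × Fin n) : Prop :=
  x.1 < y.1 ∨ (x.1 = y.1 ∧ x.2 < y.2)

def wdeg (d : Fin (n + 1) × Fin n →₀ ℕ) : ℕ := d.sum fun _ e => e

def GrevlexLT (d e : Fin (n + 1) × Fin n →₀ ℕ) : Prop :=
  wdeg d < wdeg e ∨
    (wdeg d = wdeg e ∧ ∃ x, e x < d x ∧ ∀ y, varLT y x → d y = e y)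

section PermExponent

variable {ι ρ : Type*} [Fintype ι]

noncomputable def permExponent (g : ι → ρ) (p : Equiv.Perm ι) : ρ × ι →₀ ℕ :=
  ∑ j, Finsupp.single (g (p j), j) 1

lemma permExponent_apply [DecidableEq ρ] (g : ι → ρ) (p : Equiv.Perm ι) (r : ρ) (c : ι) :
    permExponent g p (r, c) = if g (p c) = r then 1 else 0 := by
  classical
  rw [permExponent, Finsupp.finsetSum_apply, Finset.sum_eq_single c]
  · simp [Finsupp.single_apply]
  · intro j _ hj
    simp [hj]
  · simp

lemma permExponent_injective {g : ι → ρ} (hg : g.Injective) :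
    (permExponent (ι := ι) g).Injective := by
  classical
  refine fun p q hpq => Equiv.ext fun c => ?_
  have hq : permExponent g q (g (p c), c) = 1 := by rw [← hpq, permExponent_apply, if_pos rfl]
  rw [permExponent_apply] at hq
  split_ifs at hq with hqc
  exact (hg hqc).symm

lemma sum_permExponent (g : ι → ρ) (p : Equiv.Perm ι) :
    (permExponent g p).sum (fun _ e => e) = Fintype.card ι := by
  rw [permExponent, ← Finsupp.sum_finsetSum_index (fun _ => rfl) (fun _ _ _ => rfl)]
  simp

lemma prod_X_eq_monomial_permExponent (R : Type*) [CommRing R] (g : ι → ρ) (p : Equiv.Perm ι) :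
    ∏ j, (X (g (p j), j) : MvPolynomial (ρ × ι) R) = monomial (permExponent g p) 1 := by
  rw [permExponent, monomial_sum_one]
  rfl

variable [DecidableEq ι] [DecidableEq ρ]

lemma coeff_det_submatrix_X (R : Type*) [CommRing R] (g : ι → ρ) (d : ρ × ι →₀ ℕ) :
    coeff d ((of fun i j => (X (i, j) : MvPolynomial (ρ × ι) R)).submatrix g id).det =
      ∑ p : Equiv.Perm ι, if permExponent g p = d then ((Equiv.Perm.sign p : ℤ) : R) else 0 := by
  rw [det_apply, coeff_sum]
  refine Finset.sum_congr rfl fun p _ => ?_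
  simp only [submatrix_apply, of_apply, id_eq, prod_X_eq_monomial_permExponent, Units.smul_def,
    coeff_smul, coeff_monomial]
  split_ifs <;> simp

lemma coeff_permExponent_det_submatrix_X (R : Type*) [CommRing R] {g : ι → ρ} (hg : g.Injective)
    (p : Equiv.Perm ι) :
    coeff (permExponent g p)
        ((of fun i j => (X (i, j) : MvPolynomial (ρ × ι) R)).submatrix g id).det =
      (Equiv.Perm.sign p : ℤ) := by
  rw [coeff_det_submatrix_X, Finset.sum_eq_single p (fun q _ hqp => if_neg fun he => hqp
    (permExponent_injective hg he)) (by simp), if_pos rfl]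

lemma exists_permExponent_eq_of_mem_support {R : Type*} [CommRing R] {g : ι → ρ}
    {d : ρ × ι →₀ ℕ}
    (hd : d ∈ ((of fun i j => (X (i, j) : MvPolynomial (ρ × ι) R)).submatrix g id).det.support) :
    ∃ p, permExponent g p = d := by
  by_contra! hne
  rw [mem_support_iff, coeff_det_submatrix_X] at hd
  exact hd (Finset.sum_eq_zero fun p _ => if_neg (hne p))

end PermExponent

lemma exists_symm_lt_rev_of_ne_revPerm {σ : Equiv.Perm (Fin n)} (hσ : σ ≠ Fin.revPerm) :
    ∃ i₀, σ.symm i₀ < i₀.rev ∧ ∀ i < i₀, σ.symm i = i.rev := by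
  have hex : ∃ i, σ.symm i ≠ i.rev := by
    by_contra! h
    exact hσ (Equiv.ext fun j => (Fin.rev_eq_iff.2 (by simpa using h (σ j))).symm)
  obtain ⟨i₀, hi₀, hmin⟩ := WellFounded.has_min wellFounded_lt {i | σ.symm i ≠ i.rev} hex
  have hmin' : ∀ i < i₀, σ.symm i = i.rev := fun i hi => by_contra fun hne => hmin i hne hi
  refine ⟨i₀, lt_of_le_of_ne (not_lt.1 fun hlt => ?_) hi₀, hmin'⟩
  have hrev : (σ.symm i₀).rev < i₀ := Fin.rev_lt_iff.1 hlt
  exact hrev.ne (σ.symm.injective (by rw [hmin' _ hrev, Fin.rev_rev]))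

lemma grevlexLT_permExponent_revPerm {g : Fin n → Fin (n + 1)} (hg : StrictMono g)
    {σ : Equiv.Perm (Fin n)} (hσ : σ ≠ Fin.revPerm) :
    GrevlexLT (permExponent g σ) (permExponent g Fin.revPerm) := by
  obtain ⟨i₀, hlt, hmin⟩ := exists_symm_lt_rev_of_ne_revPerm hσ
  refine .inr ⟨by rw [wdeg, wdeg, sum_permExponent, sum_permExponent], (g i₀, σ.symm i₀), ?_, ?_⟩
  · have hne : (σ.symm i₀).rev ≠ i₀ := fun he => hlt.ne (Fin.rev_eq_iff.1 he)
    simp [permExponent_apply, hg.injective.ne hne]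
  · rintro ⟨r, c⟩ (hr | ⟨rfl, hc⟩)
    · by_cases hc : σ c = c.rev
      · simp [permExponent_apply, hc]
      · have hσc : g (σ c) ≠ r := fun he => hc <| by
          have := hmin (σ c) (hg.lt_iff_lt.1 (he ▸ hr))
          rwa [σ.symm_apply_apply, eq_comm, Fin.rev_eq_iff] at this
        have hrevc : g c.rev ≠ r := fun he => hc <| by
          have := hmin c.rev (hg.lt_iff_lt.1 (he ▸ hr))
          rwa [Fin.rev_rev, σ.symm_apply_eq, eq_comm] at this
        simp [permExponent_apply, hσc, hrevc]
    · have hσc : σ c ≠ i₀ := fun he => hc.ne (σ.eq_symm_apply.2 he)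
      have hrevc : c.rev ≠ i₀ := fun he => (hc.trans hlt).ne (Fin.rev_eq_iff.1 he)
      simp [permExponent_apply, hg.injective.ne hσc, hg.injective.ne hrevc]

lemma val_succAbove_rev (h : Fin (n + 1)) (j : Fin n) :
    (h.succAbove j.rev : ℕ) = if (j : ℕ) < n - h then n - j else n - 1 - j := by
  rcases lt_or_ge j.rev.castSucc h with hj | hj
  · rw [Fin.lt_def, Fin.val_castSucc, Fin.val_rev] at hj
    rw [Fin.succAbove_of_castSucc_lt _ _ hj, if_neg (by omega), Fin.val_castSucc, Fin.val_rev]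
    omega
  · rw [Fin.le_def, Fin.val_castSucc, Fin.val_rev] at hj
    rw [Fin.succAbove_of_le_castSucc _ _ hj, if_pos (by omega), Fin.val_succ, Fin.val_rev]
    omega

/-- Rows and columns are `0`-indexed: in column `j`, the monomial `y_h` uses the variable of row
`n-j` when `j < n - h` and that of row `n-1-j` otherwise. -/
theorem leadingMonomial_Fh (k : Type*) [Field k]
    (h : Fin (n + 1)) :
    let F : MvPolynomial (Fin (n + 1) × Fin n) k :=
      Matrix.det ((Matrix.of fun (i : Fin (n + 1)) (j : Fin n) => X (i, j)).submatrix
        h.succAbove id)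
    let m : Fin (n + 1) × Fin n →₀ ℕ :=
      ∑ j : Fin n,
        Finsupp.single
          ((if (j : ℕ) < n - (h : ℕ) then (⟨n - (j : ℕ), by omega⟩ : Fin (n + 1))
            else ⟨n - 1 - (j : ℕ), by omega⟩), j) 1
    m ∈ F.support ∧ ∀ d ∈ F.support, d ≠ m → GrevlexLT d m := by
  intro F m
  have hm : m = permExponent h.succAbove Fin.revPerm := by
    refine Finset.sum_congr rfl fun j _ => ?_
    congr 2
    ext
    rw [Fin.revPerm_apply, val_succAbove_rev]
    split_ifs <;> rfl
  have hg := Fin.strictMono_succAbove h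
  refine ⟨?_, fun d hd hdm => ?_⟩
  · rw [mem_support_iff, hm, coeff_permExponent_det_submatrix_X k hg.injective]
    exact ((Equiv.Perm.sign _).isUnit.map (Int.castRingHom k)).ne_zero
  · obtain ⟨σ, rfl⟩ := exists_permExponent_eq_of_mem_support hd
    rw [hm] at hdm ⊢
    exact grevlexLT_permExponent_revPerm hg (by rintro rfl; exact hdm rfl)

end NestedHilbertStmt13
end
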